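/- Let Q ∈ ℝⁿˣⁿ be symmetric and define f(x) := ½[ max(‖x‖₂², 1) − xᵀQx ] for x ∈ ℝⁿ. Suppose neither 0 nor 1 is an eigenvalue of Q, and let x̄ ∈ ℝⁿ with ‖x̄‖₂ = 1. Then x̄ satisfies the unconstrained second-order necessary condition for f — i.e., f'(x̄;d) ≥ 0 for all d ∈ ℝⁿ and f⁽²⁾(x̄;d) ≥ 0 for all d with f'(x̄;d) = 0 — if and only if x̄ is an eigenvector of Q corresponding to an eigenvalue β ∈ (0,1) and the implication [ x̄ᵀd = 0 ⇒ dᵀQd ≤ ‖d‖₂² ] holds. -/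
import Mathlib


open Filter Topology Set

noncomputable section

/-- One-sided directional derivative: `f'(x;v) = d`. -/
def HasDirDeriv {n : ℕ} (f : (Fin n → ℝ) → ℝ) (x v : Fin n → ℝ) (d : ℝ) : Prop :=
  Tendsto (fun τ : ℝ => (f (x + τ • v) - f x) / τ) (𝓝[>] 0) (𝓝 d)

/-- Second-order directional derivative: `f'(x;v) = d₁` and `f⁽²⁾(x;v) = d₂`. -/
def HasDirDeriv2 {n : ℕ} (f : (Fin n → ℝ) → ℝ) (x v : Fin n → ℝ) (d₁ d₂ : ℝ) : Prop :=
  HasDirDeriv f x v d₁ ∧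
  Tendsto (fun τ : ℝ => 2 * (f (x + τ • v) - f x - τ * d₁) / τ ^ 2) (𝓝[>] 0) (𝓝 d₂)

lemma aux_deriv2 {n : ℕ} (Q : Matrix (Fin n) (Fin n) ℝ) (hQ : ∀ i j, Q i j = Q j i)
    (f : (Fin n → ℝ) → ℝ)
    (hf : ∀ x, f x = (1/2) * (max (∑ i, x i ^ 2) 1 - ∑ i, ∑ j, Q i j * x i * x j))
    (xbar : Fin n → ℝ) (hxbar : ∑ i, xbar i ^ 2 = 1) (d : Fin n → ℝ) :
    HasDirDeriv2 f xbar d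
      (max (∑ i, xbar i * d i) 0 - ∑ i, ∑ j, Q i j * xbar i * d j)
      (if 0 ≤ ∑ i, xbar i * d i
        then (∑ i, d i ^ 2) - ∑ i, ∑ j, Q i j * d i * d j
        else - ∑ i, ∑ j, Q i j * d i * d j) := by
  set a := ∑ i, xbar i * d i with ha
  set D := ∑ i, d i ^ 2 with hD
  set c := ∑ i, ∑ j, Q i j * xbar i * d j with hc
  set q := ∑ i, ∑ j, Q i j * d i * d j with hq
  set s0 := ∑ i, ∑ j, Q i j * xbar i * xbar j with hs0
  -- swap lemma
  have hswap : (∑ i, ∑ j, Q i j * d i * xbar j) = c := by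
    rw [hc, Finset.sum_comm]
    apply Finset.sum_congr rfl
    intro i _
    apply Finset.sum_congr rfl
    intro j _
    rw [hQ j i]; ring
  have hDnn : 0 ≤ D := Finset.sum_nonneg fun i _ => sq_nonneg _
  -- expansion of f along the ray
  have hexp : ∀ τ : ℝ, f (xbar + τ • d)
      = (1/2) * (max (1 + 2*τ*a + τ^2*D) 1 - (s0 + 2*τ*c + τ^2*q)) := by
    intro τ
    rw [hf]
    have h1 : (∑ i, (xbar + τ • d) i ^ 2) = 1 + 2*τ*a + τ^2*D := by
      have : ∀ i, (xbar + τ • d) i ^ 2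
          = xbar i ^ 2 + (2*τ*(xbar i * d i) + τ^2 * d i ^ 2) := by
        intro i; simp [Pi.add_apply, Pi.smul_apply, smul_eq_mul]; ring
      rw [Finset.sum_congr rfl fun i _ => this i, Finset.sum_add_distrib,
        Finset.sum_add_distrib, hxbar, ← Finset.mul_sum, ← Finset.mul_sum, ← ha, ← hD]
      ring
    have h2 : (∑ i, ∑ j, Q i j * (xbar + τ • d) i * (xbar + τ • d) j)
        = s0 + 2*τ*c + τ^2*q := by
      have : ∀ i j, Q i j * (xbar + τ • d) i * (xbar + τ • d) j
          = Q i j * xbar i * xbar j + (τ * (Q i j * xbar i * d j)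
            + (τ * (Q i j * d i * xbar j) + τ^2 * (Q i j * d i * d j))) := by
        intro i j; simp [Pi.add_apply, Pi.smul_apply, smul_eq_mul]; ring
      simp only [this, Finset.sum_add_distrib, ← Finset.mul_sum]
      rw [← hs0, ← hc, ← hq, hswap]
      ring
    rw [h1, h2]
  have hfx : f xbar = (1/2) * (1 - s0) := by
    rw [hf, hxbar, ← hs0, max_self]
  by_cases hA : 0 ≤ a
  · -- max = left branch for τ > 0
    have hmax : ∀ τ : ℝ, 0 < τ → max (1 + 2*τ*a + τ^2*D) 1 = 1 + 2*τ*a + τ^2*D := by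
      intro τ hτ; apply max_eq_left; nlinarith [sq_nonneg τ]
    have hquot1 : ∀ τ : ℝ, 0 < τ →
        (f (xbar + τ • d) - f xbar) / τ = (a - c) + τ * ((D - q)/2) := by
      intro τ hτ
      rw [hexp, hfx, hmax τ hτ]
      field_simp
      ring
    have hquot2 : ∀ τ : ℝ, 0 < τ →
        2 * (f (xbar + τ • d) - f xbar - τ * (max a 0 - c)) / τ ^ 2 = D - q := by
      intro τ hτ
      rw [hexp, hfx, hmax τ hτ, max_eq_left hA]
      field_simp
      ring
    rw [if_pos hA]
    constructor
    · unfold HasDirDeriv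
      have hlim : Tendsto (fun τ : ℝ => (a - c) + τ * ((D - q)/2)) (𝓝[>] 0)
          (𝓝 (a - c)) := by
        have h : Tendsto (fun τ : ℝ => (a - c) + τ * ((D - q)/2)) (𝓝 (0:ℝ))
            (𝓝 ((a - c) + 0 * ((D - q)/2))) :=
          (tendsto_id.mul tendsto_const_nhds).const_add _
        simpa using h.mono_left nhdsWithin_le_nhds
      refine (hlim.congr' ?_).mono_right (by rw [max_eq_left hA])
      filter_upwards [self_mem_nhdsWithin] with τ hτ
      exact (hquot1 τ hτ).symm
    · have hlim : Tendsto (fun _ : ℝ => D - q) (𝓝[>] 0) (𝓝 (D - q)) := tendsto_const_nhds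
      refine hlim.congr' ?_
      filter_upwards [self_mem_nhdsWithin] with τ hτ
      exact (hquot2 τ hτ).symm
  · -- a < 0 : max = 1 for small τ > 0
    push_neg at hA
    have hdne : d ≠ 0 := by
      intro h
      rw [h] at ha
      simp at ha
      exact absurd ha (by linarith)
    have hDpos : 0 < D := by
      obtain ⟨i, hi⟩ : ∃ i, d i ≠ 0 := by
        by_contra h; push_neg at h; exact hdne (funext h)
      calc (0:ℝ) < d i ^ 2 := by positivity
        _ ≤ D := Finset.single_le_sum (fun j _ => sq_nonneg (d j)) (Finset.mem_univ i)
    set ε := -2*a/D with hε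
    have hεpos : 0 < ε := by
      apply div_pos (by linarith) hDpos
    have hmax : ∀ τ : ℝ, τ ∈ Ioo (0:ℝ) ε → max (1 + 2*τ*a + τ^2*D) 1 = 1 := by
      intro τ ⟨hτ0, hτε⟩
      apply max_eq_right
      have : τ * D < -2*a := by
        rw [hε] at hτε
        calc τ * D < (-2*a/D) * D := by exact mul_lt_mul_of_pos_right hτε hDpos
          _ = -2*a := by field_simp
      nlinarith
    have hquot1 : ∀ τ : ℝ, τ ∈ Ioo (0:ℝ) ε →
        (f (xbar + τ • d) - f xbar) / τ = -c + τ * (-q/2) := by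
      intro τ hτ
      rw [hexp, hfx, hmax τ hτ]
      have : τ ≠ 0 := ne_of_gt hτ.1
      field_simp
      ring
    have hquot2 : ∀ τ : ℝ, τ ∈ Ioo (0:ℝ) ε →
        2 * (f (xbar + τ • d) - f xbar - τ * (max a 0 - c)) / τ ^ 2 = -q := by
      intro τ hτ
      rw [hexp, hfx, hmax τ hτ, max_eq_right (le_of_lt hA)]
      have : τ ≠ 0 := ne_of_gt hτ.1
      field_simp
      ring
    rw [if_neg (not_le.mpr hA)]
    constructor
    · unfold HasDirDeriv
      have hlim : Tendsto (fun τ : ℝ => -c + τ * (-q/2)) (𝓝[>] 0) (𝓝 (-c)) := by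
        have h : Tendsto (fun τ : ℝ => -c + τ * (-q/2)) (𝓝 (0:ℝ))
            (𝓝 (-c + 0 * (-q/2))) :=
          (tendsto_id.mul tendsto_const_nhds).const_add _
        simpa using h.mono_left nhdsWithin_le_nhds
      refine (hlim.congr' ?_).mono_right (by rw [max_eq_right (le_of_lt hA), zero_sub])
      filter_upwards [Ioo_mem_nhdsGT hεpos] with τ hτ
      exact (hquot1 τ hτ).symm
    · have hlim : Tendsto (fun _ : ℝ => -q) (𝓝[>] 0) (𝓝 (-q)) := tendsto_const_nhds
      refine hlim.congr' ?_
      filter_upwards [Ioo_mem_nhdsGT hεpos] with τ hτ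
      exact (hquot2 τ hτ).symm

lemma dirDeriv_unique {n : ℕ} {f : (Fin n → ℝ) → ℝ} {x v : Fin n → ℝ} {d₁ d₂ : ℝ}
    (h1 : HasDirDeriv f x v d₁) (h2 : HasDirDeriv f x v d₂) : d₁ = d₂ :=
  tendsto_nhds_unique h1 h2

/-- For `f(x) = ½[max(‖x‖₂²,1) − xᵀQx]` with neither `0` nor `1` an
eigenvalue of `Q`, and `‖xbar‖₂ = 1`: `xbar` satisfies the unconstrained second-order
necessary condition iff `xbar` is an eigenvector of `Q` with eigenvalue `β ∈ (0,1)` and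
`x̄ᵀd = 0 ⇒ dᵀQd ≤ ‖d‖₂²`. -/
theorem stmt17 {n : ℕ} (Q : Matrix (Fin n) (Fin n) ℝ) (hQ : ∀ i j, Q i j = Q j i)
    (h0 : ∀ v : Fin n → ℝ, (∀ i, (∑ j, Q i j * v j) = 0) → v = 0)
    (h1 : ∀ v : Fin n → ℝ, (∀ i, (∑ j, Q i j * v j) = v i) → v = 0)
    (f : (Fin n → ℝ) → ℝ)
    (hf : ∀ x, f x = (1/2) * (max (∑ i, x i ^ 2) 1 - ∑ i, ∑ j, Q i j * x i * x j))
    (xbar : Fin n → ℝ) (hxbar : ∑ i, xbar i ^ 2 = 1) :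
    ((∀ d : Fin n → ℝ, ∃ fd, HasDirDeriv f xbar d fd ∧ 0 ≤ fd) ∧
     (∀ d : Fin n → ℝ, ∀ fd, HasDirDeriv f xbar d fd → fd = 0 →
        ∃ sd, HasDirDeriv2 f xbar d fd sd ∧ 0 ≤ sd)) ↔
    ((∃ β ∈ Set.Ioo (0:ℝ) 1, ∀ i, (∑ j, Q i j * xbar j) = β * xbar i) ∧
     (∀ d : Fin n → ℝ, (∑ i, xbar i * d i) = 0 →
        (∑ i, ∑ j, Q i j * d i * d j) ≤ ∑ i, d i ^ 2)) := by
  have key := fun d => aux_deriv2 Q hQ f hf xbar hxbar d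
  have hcw : ∀ d : Fin n → ℝ,
      (∑ i, ∑ j, Q i j * xbar i * d j) = ∑ j, (∑ k, Q j k * xbar k) * d j := by
    intro d
    rw [Finset.sum_comm]
    apply Finset.sum_congr rfl
    intro j _
    rw [Finset.sum_mul]
    apply Finset.sum_congr rfl
    intro i _
    rw [hQ i j]
  have hxx : (∑ i, xbar i * xbar i) = 1 := by
    rw [← hxbar]; exact Finset.sum_congr rfl fun i _ => (sq (xbar i)).symm
  constructor
  · rintro ⟨hfo, hso⟩
    have hfo' : ∀ d : Fin n → ℝ,
        0 ≤ max (∑ i, xbar i * d i) 0 - ∑ j, (∑ k, Q j k * xbar k) * d j := by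
      intro d
      obtain ⟨fd, hfd, hfd0⟩ := hfo d
      have heq := dirDeriv_unique hfd (key d).1
      rw [heq, hcw d] at hfd0
      exact hfd0
    have horth : ∀ d : Fin n → ℝ, (∑ i, xbar i * d i) = 0 →
        (∑ j, (∑ k, Q j k * xbar k) * d j) = 0 := by
      intro d hd
      have h₁ := hfo' d
      have h₂ := hfo' (-d)
      simp only [Pi.neg_apply, mul_neg, Finset.sum_neg_distrib, hd, neg_zero,
        max_self, zero_sub, sub_neg_eq_add, zero_add] at h₁ h₂
      linarith
    set w : Fin n → ℝ := fun j => ∑ k, Q j k * xbar k with hw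
    set β : ℝ := ∑ k, w k * xbar k with hβ
    have hu : (∑ i, xbar i * (w i - β * xbar i)) = 0 := by
      have : ∀ i, xbar i * (w i - β * xbar i)
          = w i * xbar i - β * (xbar i * xbar i) := by intro i; ring
      rw [Finset.sum_congr rfl fun i _ => this i, Finset.sum_sub_distrib,
        ← Finset.mul_sum, hxx, ← hβ]
      ring
    have h0' := horth (fun i => w i - β * xbar i) hu
    have hsq : (∑ j, (w j - β * xbar j)^2) = 0 := by
      have hexp : ∀ j, (w j - β * xbar j)^2
          = w j * (w j - β * xbar j) - β * (xbar j * (w j - β * xbar j)) := by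
        intro j; ring
      rw [Finset.sum_congr rfl fun j _ => hexp j, Finset.sum_sub_distrib,
        ← Finset.mul_sum, hu, h0']
      ring
    have hwβ : ∀ j, w j = β * xbar j := by
      intro j
      have h := (Finset.sum_eq_zero_iff_of_nonneg
        (fun i _ => sq_nonneg (w i - β * xbar i))).mp hsq j (Finset.mem_univ j)
      have := pow_eq_zero_iff (n := 2) (by norm_num) |>.mp h
      linarith
    have hβle1 : β ≤ 1 := by
      have := hfo' xbar
      rw [hxx, ← hβ] at this
      have hm : max (1:ℝ) 0 = 1 := max_eq_left (by norm_num)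
      rw [hm] at this
      linarith
    have hβge0 : 0 ≤ β := by
      have := hfo' (-xbar)
      simp only [Pi.neg_apply, mul_neg, Finset.sum_neg_distrib, hxx, ← hβ] at this
      have hm : max (-1:ℝ) 0 = 0 := max_eq_right (by norm_num)
      rw [hm] at this
      linarith
    have hβne0 : β ≠ 0 := by
      intro h
      have := h0 xbar (fun i => by
        have := hwβ i; rw [h, zero_mul] at this; exact this)
      rw [this] at hxbar
      simp at hxbar
    have hβne1 : β ≠ 1 := by
      intro h
      have := h1 xbar (fun i => by
        have := hwβ i; rw [h, one_mul] at this; exact this)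
      rw [this] at hxbar
      simp at hxbar
    refine ⟨⟨β, ⟨lt_of_le_of_ne hβge0 (Ne.symm hβne0), lt_of_le_of_ne hβle1 hβne1⟩,
      fun i => hwβ i⟩, ?_⟩
    intro d hd
    have hc0 : (∑ i, ∑ j, Q i j * xbar i * d j) = 0 := by
      rw [hcw d]; exact horth d hd
    have hfdzero : max (∑ i, xbar i * d i) 0 - (∑ i, ∑ j, Q i j * xbar i * d j) = 0 := by
      rw [hd, hc0, max_self]; ring
    obtain ⟨sd, hsd2, hsd0⟩ := hso d _ (key d).1 hfdzero
    have hval : sd = (if 0 ≤ ∑ i, xbar i * d i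
        then (∑ i, d i ^ 2) - ∑ i, ∑ j, Q i j * d i * d j
        else - ∑ i, ∑ j, Q i j * d i * d j) := tendsto_nhds_unique hsd2.2 (key d).2
    rw [if_pos (le_of_eq hd.symm)] at hval
    rw [hval] at hsd0
    linarith
  · rintro ⟨⟨β, ⟨hβ0, hβ1⟩, heig⟩, hcurv⟩
    have hcβ : ∀ d : Fin n → ℝ,
        (∑ i, ∑ j, Q i j * xbar i * d j) = β * ∑ i, xbar i * d i := by
      intro d
      rw [hcw d, Finset.mul_sum]
      apply Finset.sum_congr rfl
      intro j _
      rw [heig j]; ring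
    constructor
    · intro d
      refine ⟨_, (key d).1, ?_⟩
      rw [hcβ d]
      rcases le_or_gt 0 (∑ i, xbar i * d i) with h|h
      · rw [max_eq_left h]; nlinarith
      · rw [max_eq_right h.le]; nlinarith
    · intro d fd hfd hfd0
      have hfdval := dirDeriv_unique hfd (key d).1
      have ha0 : (∑ i, xbar i * d i) = 0 := by
        rw [hfdval, hcβ d] at hfd0
        rcases lt_trichotomy (∑ i, xbar i * d i) 0 with h|h|h
        · rw [max_eq_right h.le] at hfd0; nlinarith
        · exact h
        · rw [max_eq_left h.le] at hfd0; nlinarith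
      refine ⟨(∑ i, d i ^ 2) - ∑ i, ∑ j, Q i j * d i * d j, ?_, ?_⟩
      · rw [hfdval]
        have := key d
        rwa [if_pos (le_of_eq ha0.symm)] at this
      · have := hcurv d ha0
        linarith
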